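/- Let Γ be a commutative thick weakly distance-regular digraph in which D(q) exists, i.e. p^{(1,q-1)}_{(1,q-2),(q-2,1)} ≠ 0 and (1,q-2) is pure. Then Γ_{1,q-1}^2 = {Γ_{2,q-2}} or Γ_{1,q-1}^2 = {Γ_{2,q-1}}. -/

import Mathlib

/-!
Common framework: commutative thick weakly distance-regular digraphs.
-/

variable {V : Type*}

/-- There is a directed walk of length `n` from `x` to `y`. -/
def HasWalk (adj : V → V → Prop) (x y : V) (n : ℕ) : Prop :=
  ∃ f : ℕ → V, f 0 = x ∧ f n = y ∧ ∀ i < n, adj (f i) (f (i + 1))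

/-- Directed distance `∂(x,y)`. -/
noncomputable def ddist (adj : V → V → Prop) (x y : V) : ℕ :=
  sInf {n | HasWalk adj x y n}

/-- Two-way distance `∂̃(x,y) = (∂(x,y), ∂(y,x))`. -/
noncomputable def tdist (adj : V → V → Prop) (x y : V) : ℕ × ℕ :=
  (ddist adj x y, ddist adj y x)

/-- The pair `i` is an attained two-way distance, i.e. `i ∈ ∂̃(Γ)`. -/
def Attained (adj : V → V → Prop) (i : ℕ × ℕ) : Prop :=
  ∃ x y : V, tdist adj x y = i

/-- Intersection number `p^h_{i,j}`: for attained `h` it is the common cardinality of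
`{z | ∂̃(x,z) = i, ∂̃(z,y) = j}` over pairs with `∂̃(x,y) = h` (and `0` otherwise). -/
noncomputable def pnum (adj : V → V → Prop) (h i j : ℕ × ℕ) : ℕ :=
  sSup {n | ∃ x y : V, tdist adj x y = h ∧
    n = Set.ncard {z : V | tdist adj x z = i ∧ tdist adj z y = j}}

/-- Valency `k_i = |Γ_i(x)|`. -/
noncomputable def kval (adj : V → V → Prop) (i : ℕ × ℕ) : ℕ :=
  pnum adj (0, 0) i i.swap

/-- Adjacency of the subdigraph `Δ_J`: arcs of type `(1, t-1)` for `t ∈ J`. -/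
def deltaAdj (adj : V → V → Prop) (J : Set ℕ) (u v : V) : Prop :=
  ∃ t ∈ J, tdist adj u v = (1, t - 1)

/-- A circuit of length `s`. -/
def IsCircuit (adj : V → V → Prop) (s : ℕ) (f : ℕ → V) : Prop :=
  0 < s ∧ f s = f 0 ∧ ∀ i < s, adj (f i) (f (i + 1))

/-- Strongly connected. -/
def IsStrong (adj : V → V → Prop) : Prop :=
  ∀ x y : V, ∃ n, HasWalk adj x y n

/-- Weakly distance-regular: the intersection numbers are well defined. -/
def IsWDR (adj : V → V → Prop) : Prop :=
  ∀ (i j : ℕ × ℕ) (x y x' y' : V), tdist adj x y = tdist adj x' y' →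
    Set.ncard {z : V | tdist adj x z = i ∧ tdist adj z y = j}
      = Set.ncard {z : V | tdist adj x' z = i ∧ tdist adj z y' = j}

/-- Thick: `p^h_{i,i}, p^h_{i,i*} ∈ {0, k_i}`. -/
def IsThick (adj : V → V → Prop) : Prop :=
  ∀ h i : ℕ × ℕ,
    (pnum adj h i i = 0 ∨ pnum adj h i i = kval adj i) ∧
    (pnum adj h i i.swap = 0 ∨ pnum adj h i i.swap = kval adj i)

/-- A thick weakly distance-regular digraph (as a property of an adjacency relation). -/
def IsWDRThick (adj : V → V → Prop) : Prop :=
  IsStrong adj ∧ IsWDR adj ∧ IsThick adj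

/-- A commutative thick weakly distance-regular digraph. -/
structure CTWDR (V : Type*) [Fintype V] where
  adj : V → V → Prop
  loopless : ∀ v, ¬ adj v v
  strong : IsStrong adj
  wdr : IsWDR adj
  comm : ∀ (i j : ℕ × ℕ) (x y : V),
    Set.ncard {z : V | tdist adj x z = i ∧ tdist adj z y = j}
      = Set.ncard {z : V | tdist adj x z = j ∧ tdist adj z y = i}
  thick : IsThick adj

namespace CTWDR

variable {V : Type*} [Fintype V] (G : CTWDR V)

/-- Product `EF` of two sets of relations (relations identified with two-way distances). -/
def prodS (E F : Set (ℕ × ℕ)) : Set (ℕ × ℕ) :=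
  {h | ∃ i ∈ E, ∃ j ∈ F, pnum G.adj h i j ≠ 0}

/-- Powers `Γ_i^l` (with `Γ_i^0 = {Γ_{(0,0)}}` and `Γ_i^1 = {Γ_i}`). -/
def pow (i : ℕ × ℕ) : ℕ → Set (ℕ × ℕ)
  | 0 => {(0, 0)}
  | 1 => {i}
  | n + 2 => G.prodS (pow i (n + 1)) {i}

/-- The pair `(1, s-1)` is pure: every circuit of length `s` containing an arc of type
`(1, s-1)` consists of arcs of type `(1, s-1)`. -/
def Pure (s : ℕ) : Prop :=
  ∀ f : ℕ → V, IsCircuit G.adj s f →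
    (∃ i < s, tdist G.adj (f i) (f (i + 1)) = (1, s - 1)) →
    ∀ i < s, tdist G.adj (f i) (f (i + 1)) = (1, s - 1)

/-- `(1, s-1)` is mixed. -/
def Mixed (s : ℕ) : Prop := ¬ G.Pure s

/-- Configuration `C(q)` exists. -/
def Cexists (q : ℕ) : Prop :=
  pnum G.adj (1, q - 2) (1, q - 1) (1, q - 1) ≠ 0 ∧ G.Pure (q - 1)

/-- Configuration `D(q)` exists. -/
def Dexists (q : ℕ) : Prop :=
  pnum G.adj (1, q - 1) (1, q - 2) (q - 2, 1) ≠ 0 ∧ G.Pure (q - 1)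

/-- A closed set of relations: `Γ_{i*}Γ_j ⊆ F` for all `i, j ∈ F`. -/
def Closed (F : Set (ℕ × ℕ)) : Prop :=
  ∀ i ∈ F, ∀ j ∈ F, G.prodS {i.swap} {j} ⊆ F

/-- The minimal closed set `⟨F⟩` containing `F`. -/
def genClosed (F : Set (ℕ × ℕ)) : Set (ℕ × ℕ) :=
  ⋂₀ {C | F ⊆ C ∧ G.Closed C}

/-- The block `F_J(x)` of the closed set generated by `{Γ_{1,t-1}}_{t ∈ J}`. -/
def block (J : Set ℕ) (x : V) : Set V :=
  {y | tdist G.adj x y ∈ G.genClosed {i | ∃ t ∈ J, i = (1, t - 1)}}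

end CTWDR

/-!
Thickness turns a nonzero intersection number `p^h_{i,i}` or `p^h_{i,i*}` into a universal
statement: for every pair `(x, y)` of type `h`, every `i`-out-neighbour of `x` is `i`-
(resp. `i*`-)related to `y`. For `D(q)`, with `ĩ = (1,q-1)` and `D = (1,q-2)`, this means that
`D`-out-neighbours and `D`-in-neighbours are inherited along arcs of type `ĩ`. Along a path
`x → u → w` of two `ĩ`-arcs, a `D`-out-neighbour shared by `x` and `w` pins `∂̃(x,w)` to
`(2,q-2)` or `(2,q-1)`. Both cannot occur: thickness gives `k_{2,q-2} + k_{2,q-1} ≤ k_ĩ`, while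
if `∂̃(x,w) = (2,q-2)`, the vertex preceding `x` on a geodesic from `w` sees every
`ĩ`-out-neighbour of `x` at `(2,q-2)`, so `k_ĩ ≤ k_{2,q-2}`.
-/

section Distance

variable {adj : V → V → Prop} {x y z : V} {m n : ℕ}

lemma hasWalk_zero (adj : V → V → Prop) (x : V) : HasWalk adj x x 0 :=
  ⟨fun _ => x, rfl, rfl, fun _ h => absurd h (Nat.not_lt_zero _)⟩

lemma hasWalk_one (h : adj x y) : HasWalk adj x y 1 :=
  ⟨fun i => if i = 0 then x else y, rfl, rfl, fun i hi => by
    obtain rfl : i = 0 := by omega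
    simpa using h⟩

lemma HasWalk.append (h₁ : HasWalk adj x y m) (h₂ : HasWalk adj y z n) :
    HasWalk adj x z (m + n) := by
  obtain ⟨f, hf0, hfm, hf⟩ := h₁
  obtain ⟨g, hg0, hgn, hg⟩ := h₂
  refine ⟨fun i => if i ≤ m then f i else g (i - m), by simp [hf0], ?_, fun i hi => ?_⟩
  · rcases Nat.eq_zero_or_pos n with rfl | hn
    · simp [hfm, ← hg0, hgn]
    · simp [show ¬m + n ≤ m by omega, hgn]
  · rcases lt_trichotomy (i + 1) (m + 1) with hi' | hi' | hi'
    · simpa [show i ≤ m by omega, show i + 1 ≤ m by omega] using hf i (by omega)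
    · obtain rfl : i = m := by omega
      simpa [hfm, ← hg0] using hg 0 (by omega)
    · simpa [show ¬i ≤ m by omega, show ¬i + 1 ≤ m by omega, show i + 1 - m = i - m + 1 by omega]
        using hg (i - m) (by omega)

lemma HasWalk.exists_adj_last (h : HasWalk adj x y (n + 1)) :
    ∃ d, HasWalk adj x d n ∧ adj d y := by
  obtain ⟨f, hf0, hfn, hf⟩ := h
  exact ⟨f n, ⟨f, hf0, rfl, fun i hi => hf i (by omega)⟩, hfn ▸ hf n (by omega)⟩

lemma ddist_le_of_hasWalk (h : HasWalk adj x y n) : ddist adj x y ≤ n :=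
  Nat.sInf_le h

lemma hasWalk_ddist (hs : IsStrong adj) (x y : V) : HasWalk adj x y (ddist adj x y) :=
  Nat.sInf_mem (hs x y)

lemma ddist_self (adj : V → V → Prop) (x : V) : ddist adj x x = 0 :=
  Nat.le_zero.mp (ddist_le_of_hasWalk (hasWalk_zero adj x))

lemma ddist_eq_zero_iff (hs : IsStrong adj) : ddist adj x y = 0 ↔ x = y := by
  refine ⟨fun h => ?_, fun h => h ▸ ddist_self adj x⟩
  obtain ⟨f, hf0, hf, -⟩ := h ▸ hasWalk_ddist hs x y
  rw [← hf0, hf]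

lemma ddist_triangle (hs : IsStrong adj) (x y z : V) :
    ddist adj x z ≤ ddist adj x y + ddist adj y z :=
  ddist_le_of_hasWalk ((hasWalk_ddist hs x y).append (hasWalk_ddist hs y z))

lemma exists_ddist_pred (hs : IsStrong adj) (h : ddist adj x y = n + 1) :
    ∃ d, ddist adj x d = n ∧ ddist adj d y = 1 := by
  obtain ⟨d, hxd, hdy⟩ := (h ▸ hasWalk_ddist hs x y).exists_adj_last
  have h₁ := ddist_le_of_hasWalk hxd
  have h₂ := ddist_le_of_hasWalk (hasWalk_one hdy)
  have h₃ := ddist_triangle hs x d y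
  exact ⟨d, by omega, by omega⟩

lemma tdist_eq_iff {a b : ℕ} :
    tdist adj x y = (a, b) ↔ ddist adj x y = a ∧ ddist adj y x = b :=
  Prod.ext_iff

lemma tdist_swap (adj : V → V → Prop) (x y : V) : tdist adj y x = (tdist adj x y).swap := rfl

lemma tdist_eq_swap_iff {a b : ℕ} : tdist adj y x = (b, a) ↔ tdist adj x y = (a, b) := by
  rw [tdist_eq_iff, tdist_eq_iff, and_comm]

lemma tdist_self (adj : V → V → Prop) (x : V) : tdist adj x x = (0, 0) := by
  rw [tdist_eq_iff, ddist_self, and_self]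

end Distance

section IntersectionNumbers

variable {adj : V → V → Prop} {h h' i j : ℕ × ℕ} {x y z : V}

lemma pnum_eq_ncard (hw : IsWDR adj) (hxy : tdist adj x y = h) (i j : ℕ × ℕ) :
    pnum adj h i j = {z | tdist adj x z = i ∧ tdist adj z y = j}.ncard := by
  have hset : {n | ∃ x' y', tdist adj x' y' = h ∧
      n = {z | tdist adj x' z = i ∧ tdist adj z y' = j}.ncard} =
      {{z | tdist adj x z = i ∧ tdist adj z y = j}.ncard} := by
    ext n
    constructor
    · rintro ⟨x', y', hx'y', rfl⟩
      exact hw i j x' y' x y (hx'y'.trans hxy.symm)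
    · rintro rfl
      exact ⟨x, y, hxy, rfl⟩
  rw [pnum, hset, csSup_singleton]

lemma kval_eq_ncard (hw : IsWDR adj) (i : ℕ × ℕ) (x : V) :
    kval adj i = {y | tdist adj x y = i}.ncard := by
  rw [kval, pnum_eq_ncard hw (tdist_self adj x)]
  congr 1
  ext y
  exact and_iff_left_of_imp fun hxy => by rw [tdist_swap, hxy]

lemma exists_tdist_eq_of_pnum_ne_zero (hp : pnum adj h i j ≠ 0) :
    ∃ x y, tdist adj x y = h := by
  by_contra hne
  refine hp ((congrArg sSup (Set.eq_empty_of_forall_notMem ?_)).trans csSup_empty)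
  rintro n ⟨x, y, hxy, -⟩
  exact hne ⟨x, y, hxy⟩

lemma pnum_ne_zero_iff [Finite V] (hw : IsWDR adj) (hxy : tdist adj x y = h) :
    pnum adj h i j ≠ 0 ↔ ∃ z, tdist adj x z = i ∧ tdist adj z y = j := by
  rw [pnum_eq_ncard hw hxy, Ne, Set.ncard_eq_zero, ← Ne, ← Set.nonempty_iff_ne_empty]
  rfl

lemma exists_tdist_eq_fst_of_pnum_ne_zero [Finite V] (hw : IsWDR adj) (hp : pnum adj h i j ≠ 0) :
    ∃ x z, tdist adj x z = i := by
  obtain ⟨x, y, hxy⟩ := exists_tdist_eq_of_pnum_ne_zero hp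
  obtain ⟨z, hxz, -⟩ := (pnum_ne_zero_iff hw hxy).mp hp
  exact ⟨x, z, hxz⟩

lemma kval_pos [Finite V] (hw : IsWDR adj) (hxy : tdist adj x y = i) : 0 < kval adj i := by
  rw [kval_eq_ncard hw i x, Set.ncard_pos]
  exact ⟨y, hxy⟩

lemma exists_tdist_eq [Finite V] (hw : IsWDR adj) (hxy : tdist adj x y = i) (v : V) :
    ∃ w, tdist adj v w = i := by
  have := kval_pos hw hxy
  rwa [kval_eq_ncard hw i v, Set.ncard_pos] at this

lemma IsThick.tdist_eq [Finite V] (ht : IsThick adj) (hw : IsWDR adj) (hij : j = i ∨ j = i.swap)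
    (hp : pnum adj h i j ≠ 0) (hxy : tdist adj x y = h) (hxz : tdist adj x z = i) :
    tdist adj z y = j := by
  have hk : pnum adj h i j = kval adj i := by
    rcases hij with rfl | rfl
    exacts [(ht h _).1.resolve_left hp, (ht h _).2.resolve_left hp]
  rw [pnum_eq_ncard hw hxy, kval_eq_ncard hw i x] at hk
  have hall := Set.eq_of_subset_of_ncard_le (fun _ hz => hz.1) hk.ge
  exact (hall.symm ▸ hxz : z ∈ {z | tdist adj x z = i ∧ tdist adj z y = j}).2

lemma IsThick.pnum_self_eq_zero [Finite V] (ht : IsThick adj) (hw : IsWDR adj)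
    (hi : i ≠ (0, 0)) : pnum adj i i i = 0 := by
  by_contra hp
  obtain ⟨x, y, hxy⟩ := exists_tdist_eq_of_pnum_ne_zero hp
  exact hi ((ht.tdist_eq hw (Or.inl rfl) hp hxy hxy).symm.trans (tdist_self adj y))

lemma IsThick.kval_add_kval_le [Finite V] (ht : IsThick adj) (hw : IsWDR adj) (hh : h ≠ h')
    (hp : pnum adj h i i ≠ 0) (hp' : pnum adj h' i i ≠ 0) :
    kval adj h + kval adj h' ≤ kval adj i := by
  obtain ⟨x, y, hxy⟩ := exists_tdist_eq_of_pnum_ne_zero hp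
  obtain ⟨u, hxu, -⟩ := (pnum_ne_zero_iff hw hxy).mp hp
  have hsub : ∀ {h}, pnum adj h i i ≠ 0 →
      {v | tdist adj x v = h} ⊆ {v | tdist adj u v = i} :=
    fun hp _ hxv => ht.tdist_eq hw (Or.inl rfl) hp hxv hxu
  have hdisj : Disjoint {v | tdist adj x v = h} {v | tdist adj x v = h'} :=
    Set.disjoint_left.mpr fun _ hv hv' => hh (hv.symm.trans hv')
  rw [kval_eq_ncard hw h x, kval_eq_ncard hw h' x, kval_eq_ncard hw i u,
    ← Set.ncard_union_eq hdisj]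
  exact Set.ncard_le_ncard (Set.union_subset (hsub hp) (hsub hp'))

end IntersectionNumbers

namespace CTWDR

variable [Fintype V]

lemma pnum_comm (G : CTWDR V) (h i j : ℕ × ℕ) : pnum G.adj h i j = pnum G.adj h j i := by
  simp only [pnum, G.comm i j]

lemma pow_two_eq (G : CTWDR V) (i : ℕ × ℕ) : G.pow i 2 = {h | pnum G.adj h i i ≠ 0} := by
  ext h
  simp [pow, prodS]

lemma pow_two_nonempty {G : CTWDR V} {i : ℕ × ℕ} {x y : V} (hxy : tdist G.adj x y = i) :
    (G.pow i 2).Nonempty := by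
  obtain ⟨w, hyw⟩ := exists_tdist_eq G.wdr hxy y
  exact ⟨tdist G.adj x w, by
    rw [pow_two_eq]
    exact (pnum_ne_zero_iff G.wdr rfl).mpr ⟨y, hxy, hyw⟩⟩

section Dq

variable {G : CTWDR V} {q : ℕ} {h : ℕ × ℕ} {a b c : V}

lemma three_le_of_pnum_D (hD : pnum G.adj (1, q - 1) (1, q - 2) (q - 2, 1) ≠ 0) : 3 ≤ q := by
  obtain ⟨x, z, hxz⟩ := exists_tdist_eq_fst_of_pnum_ne_zero G.wdr hD
  obtain ⟨hxz₁, hzx⟩ := tdist_eq_iff.mp hxz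
  by_contra hq
  rw [show q - 2 = 0 by omega, ddist_eq_zero_iff G.strong] at hzx
  rw [hzx, ddist_self] at hxz₁
  exact zero_ne_one hxz₁

lemma tdist_D_right_of_arc (hD : pnum G.adj (1, q - 1) (1, q - 2) (q - 2, 1) ≠ 0)
    (hab : tdist G.adj a b = (1, q - 1)) (hac : tdist G.adj a c = (1, q - 2)) :
    tdist G.adj b c = (1, q - 2) :=
  tdist_eq_swap_iff.mp (G.thick.tdist_eq G.wdr (Or.inr rfl) hD hab hac)

lemma tdist_D_left_of_arc (hD : pnum G.adj (1, q - 1) (1, q - 2) (q - 2, 1) ≠ 0)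
    (hab : tdist G.adj a b = (1, q - 1)) (hca : tdist G.adj c a = (1, q - 2)) :
    tdist G.adj c b = (1, q - 2) :=
  G.thick.tdist_eq G.wdr (Or.inr rfl) (G.pnum_comm _ _ _ ▸ hD) hab (tdist_eq_swap_iff.mpr hca)

lemma eq_or_eq_of_pnum_arc_arc_ne_zero (hD : pnum G.adj (1, q - 1) (1, q - 2) (q - 2, 1) ≠ 0)
    (hh : pnum G.adj h (1, q - 1) (1, q - 1) ≠ 0) : h = (2, q - 2) ∨ h = (2, q - 1) := by
  have hq := three_le_of_pnum_D hD
  obtain ⟨x, w, hxw⟩ := exists_tdist_eq_of_pnum_ne_zero hh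
  obtain ⟨u, hxu, huw⟩ := (pnum_ne_zero_iff G.wdr hxw).mp hh
  obtain ⟨x', z', hx'z'⟩ := exists_tdist_eq_fst_of_pnum_ne_zero G.wdr hD
  obtain ⟨z, hxz⟩ := exists_tdist_eq G.wdr hx'z' x
  have hwz := tdist_D_right_of_arc hD huw (tdist_D_right_of_arc hD hxu hxz)
  obtain ⟨dxu, dux⟩ := tdist_eq_iff.mp hxu
  obtain ⟨duw, -⟩ := tdist_eq_iff.mp huw
  obtain ⟨dwz, -⟩ := tdist_eq_iff.mp hwz
  obtain ⟨-, dzx⟩ := tdist_eq_iff.mp hxz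
  have t₁ := ddist_triangle G.strong x u w
  have t₂ := ddist_triangle G.strong w z x
  have t₃ := ddist_triangle G.strong u w x
  have hxw₀ : ddist G.adj x w ≠ 0 := fun h₀ => by
    rw [(ddist_eq_zero_iff G.strong).mp h₀] at dux
    omega
  have hxw₁ : ddist G.adj x w ≠ 1 := fun h₁ => by
    rcases (by omega : ddist G.adj w x = q - 2 ∨ ddist G.adj w x = q - 1) with hwx | hwx
    · have := huw.symm.trans (tdist_D_right_of_arc hD hxu (tdist_eq_iff.mpr ⟨h₁, hwx⟩))
      simp only [Prod.mk.injEq] at this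
      omega
    · refine hh ?_
      rw [← hxw, tdist_eq_iff.mpr ⟨h₁, hwx⟩]
      exact G.thick.pnum_self_eq_zero G.wdr (by simp)
  rw [← hxw, tdist_eq_iff, tdist_eq_iff]
  omega

lemma kval_arc_le_of_pnum_ne_zero (hD : pnum G.adj (1, q - 1) (1, q - 2) (q - 2, 1) ≠ 0)
    (hh : pnum G.adj (2, q - 2) (1, q - 1) (1, q - 1) ≠ 0) :
    kval G.adj (1, q - 1) ≤ kval G.adj (2, q - 2) := by
  have hq := three_le_of_pnum_D hD
  obtain ⟨x, w, hxw⟩ := exists_tdist_eq_of_pnum_ne_zero hh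
  obtain ⟨u, hxu, huw⟩ := (pnum_ne_zero_iff G.wdr hxw).mp hh
  obtain ⟨d, hwd, hdx⟩ :=
    exists_ddist_pred G.strong ((tdist_eq_iff.mp hxw).2.trans (by omega : q - 2 = q - 3 + 1))
  -- `d` precedes `x` on a geodesic from `w`; as `∂(w,d) = q-3`, it is not a `D`-in-neighbour
  -- of any vertex with an `ĩ`-arc to `w`.
  have hsub : {v | tdist G.adj x v = (1, q - 1)} ⊆ {v | tdist G.adj d v = (2, q - 2)} := by
    intro v hxv
    have hvw := G.thick.tdist_eq G.wdr (Or.inl rfl) hh hxw hxv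
    obtain ⟨dxv, dvx⟩ := tdist_eq_iff.mp hxv
    obtain ⟨dvw, -⟩ := tdist_eq_iff.mp hvw
    have t₁ := ddist_triangle G.strong v w d
    have t₂ := ddist_triangle G.strong v d x
    have t₃ := ddist_triangle G.strong d x v
    have hdv₀ : ddist G.adj d v ≠ 0 := fun h₀ => by
      rw [(ddist_eq_zero_iff G.strong).mp h₀] at hdx
      omega
    have hdv₁ : ddist G.adj d v ≠ 1 := fun h₁ => by
      have hdw := tdist_D_left_of_arc hD hvw (tdist_eq_iff.mpr ⟨h₁, by omega⟩)
      have := (tdist_eq_iff.mp hdw).2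
      omega
    exact tdist_eq_iff.mpr ⟨by omega, by omega⟩
  rw [kval_eq_ncard G.wdr _ x, kval_eq_ncard G.wdr _ d]
  exact Set.ncard_le_ncard hsub

lemma pnum_eq_zero_or_pnum_eq_zero (hD : pnum G.adj (1, q - 1) (1, q - 2) (q - 2, 1) ≠ 0) :
    pnum G.adj (2, q - 2) (1, q - 1) (1, q - 1) = 0 ∨
      pnum G.adj (2, q - 1) (1, q - 1) (1, q - 1) = 0 := by
  by_contra! hboth
  have hq := three_le_of_pnum_D hD
  obtain ⟨x, y, hxy⟩ := exists_tdist_eq_of_pnum_ne_zero hboth.2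
  have hsum := G.thick.kval_add_kval_le G.wdr (by simp; omega) hboth.1 hboth.2
  have := kval_arc_le_of_pnum_ne_zero hD hboth.1
  have := kval_pos G.wdr hxy
  omega

end Dq

end CTWDR

open CTWDR in
/-- Lemma 2.7: if `D(q)` exists, then
`Γ_{1,q-1}^2 = {Γ_{2,q-2}}` or `Γ_{1,q-1}^2 = {Γ_{2,q-1}}`. -/
theorem stmt8 {V : Type*} [Fintype V] (G : CTWDR V) (q : ℕ) (hD : G.Dexists q) :
    G.pow (1, q - 1) 2 = {(2, q - 2)} ∨ G.pow (1, q - 1) 2 = {(2, q - 1)} := by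
  obtain ⟨hpD, -⟩ := hD
  obtain ⟨x, y, hxy⟩ := exists_tdist_eq_of_pnum_ne_zero hpD
  have hne := pow_two_nonempty hxy
  rw [← hne.subset_singleton_iff, ← hne.subset_singleton_iff, G.pow_two_eq]
  have hsub h (hh : pnum G.adj h (1, q - 1) (1, q - 1) ≠ 0) :=
    eq_or_eq_of_pnum_arc_arc_ne_zero hpD hh
  rcases pnum_eq_zero_or_pnum_eq_zero hpD with h₀ | h₀
  · exact Or.inr fun h hh => (hsub h hh).resolve_left (by rintro rfl; exact hh h₀)
  · exact Or.inl fun h hh => (hsub h hh).resolve_right (by rintro rfl; exact hh h₀)
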